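/- For integers n > 2 and n/2 ≤ j < n, the ratio B_{j+1}/B_j with B_j = (n!/(n-j)!)^2 (1/j!) (1 - j/n)^{n log n} satisfies B_{j+1}/B_j ≤ 2/n. -/

import Mathlib

/-!
Writing `x = n - j`, the ratio `B_{j+1}/B_j` equals `x² / (j+1) · (1 - 1/x)^{n log n}`.
Since `1 - 1/x ≤ exp (-1/x)`, the last factor is at most `n^{-n/x} ≤ n^{-2}`, because
`j ≥ n/2` gives `n/x ≥ 2`. As `x ≤ n`, the ratio is at most `1/(j+1) ≤ 2/n`.
-/

open Real
open scoped Nat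

noncomputable def Bj (n j : ℕ) : ℝ :=
  ((n ! : ℝ) / (n - j)!) ^ 2 * (1 / j !) * (1 - (j : ℝ) / n) ^ ((n : ℝ) * log n)

lemma one_sub_inv_rpow_le_exp {x E : ℝ} (hx : 1 ≤ x) (hE : 0 ≤ E) :
    (1 - 1 / x) ^ E ≤ exp (-(E / x)) := by
  have hbase : 0 ≤ 1 - 1 / x := sub_nonneg.2 ((div_le_one (by linarith)).2 hx)
  calc (1 - 1 / x) ^ E ≤ exp (-(1 / x)) ^ E := by
        gcongr
        linarith [add_one_le_exp (-(1 / x))]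
    _ = exp (-(E / x)) := by rw [← exp_mul]; ring_nf

lemma sq_mul_one_sub_inv_rpow_le_one {x n : ℝ} (hx : 1 ≤ x) (hxn : 2 * x ≤ n) :
    x ^ 2 * (1 - 1 / x) ^ (n * log n) ≤ 1 := by
  have hn : 0 < n := by linarith
  have hlog : 0 ≤ log n := log_nonneg (by linarith)
  have hexp : 2 * log n ≤ n * log n / x := by
    rw [le_div_iff₀ (by linarith)]
    nlinarith
  calc x ^ 2 * (1 - 1 / x) ^ (n * log n) ≤ x ^ 2 * exp (-(2 * log n)) := by
        gcongr
        exact (one_sub_inv_rpow_le_exp hx (by positivity)).trans (exp_le_exp.2 (by linarith))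
    _ = x ^ 2 / n ^ 2 := by
        rw [exp_neg, ← log_rpow hn, exp_log (by positivity)]; norm_cast
    _ ≤ 1 := by rw [div_le_one (by positivity)]; gcongr; linarith

lemma Bj_succ {n j : ℕ} (hj : j < n) :
    Bj n (j + 1) =
      Bj n j * (((n : ℝ) - j) ^ 2 / (j + 1) * (1 - 1 / ((n : ℝ) - j)) ^ ((n : ℝ) * log n)) := by
  have hfac : ((n - j)! : ℝ) = ((n : ℝ) - j) * (n - (j + 1))! := by
    rw [show n - j = n - (j + 1) + 1 by omega, Nat.factorial_succ]
    push_cast [Nat.cast_sub (show j + 1 ≤ n by omega)]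
    ring
  have hjn : (j : ℝ) + 1 ≤ n := by exact_mod_cast hj
  have hx : (1 : ℝ) ≤ n - j := by linarith
  have hn : (0 : ℝ) < n := by linarith [(j.cast_nonneg : (0 : ℝ) ≤ j)]
  have hbase : 1 - ((j + 1 : ℕ) : ℝ) / n = (1 - (j : ℝ) / n) * (1 - 1 / ((n : ℝ) - j)) := by
    field_simp
    push_cast
    ring
  have ha : 0 ≤ 1 - (j : ℝ) / n := sub_nonneg.2 ((div_le_one hn).2 (by linarith))
  have hb : 0 ≤ 1 - 1 / ((n : ℝ) - j) := sub_nonneg.2 ((div_le_one (by linarith)).2 hx)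
  unfold Bj
  rw [hbase, mul_rpow ha hb, hfac, Nat.factorial_succ]
  push_cast
  field_simp

lemma Bj_pos {n j : ℕ} (hj : j < n) : 0 < Bj n j := by
  have hn : (0 : ℝ) < n := by exact_mod_cast (Nat.zero_le j).trans_lt hj
  have ha : 0 < 1 - (j : ℝ) / n := sub_pos.2 ((div_lt_one hn).2 (by exact_mod_cast hj))
  unfold Bj
  positivity

theorem Bj_ratio_le_general (n j : ℕ) (hj : (n : ℝ) / 2 ≤ j) (hjn : j < n) :
    (((n.factorial : ℝ) / (n - (j + 1)).factorial) ^ 2 * (1 / (j + 1).factorial)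
        * (1 - ((j : ℝ) + 1) / n) ^ ((n : ℝ) * Real.log n))
      / (((n.factorial : ℝ) / (n - j).factorial) ^ 2 * (1 / j.factorial)
        * (1 - (j : ℝ) / n) ^ ((n : ℝ) * Real.log n))
      ≤ 2 / n := by
  have hx : (1 : ℝ) ≤ n - j := by
    have : (j : ℝ) + 1 ≤ n := by exact_mod_cast hjn
    linarith
  have key : Bj n (j + 1) / Bj n j ≤ 2 / n := by
    rw [Bj_succ hjn, mul_div_cancel_left₀ _ (Bj_pos hjn).ne', div_mul_eq_mul_div]
    calc ((n : ℝ) - j) ^ 2 * (1 - 1 / ((n : ℝ) - j)) ^ ((n : ℝ) * log n) / (j + 1)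
        ≤ 1 / (j + 1) := by
          gcongr
          exact sq_mul_one_sub_inv_rpow_le_one hx (by linarith)
      _ ≤ 2 / n := by
          rw [div_le_div_iff₀ (by positivity) (by linarith)]
          linarith
  simpa [Bj] using key

/-- For integers `n > 2` and `n/2 ≤ j < n`, the ratio `B_{j+1}/B_j` with
`B_j = (n!/(n-j)!)² (1/j!) (1 - j/n)^{n log n}` satisfies `B_{j+1}/B_j ≤ 2/n`. -/
theorem Bj_ratio_le (n j : ℕ) (hn : 2 < n) (hj : (n : ℝ) / 2 ≤ j) (hjn : j < n) :
    (((n.factorial : ℝ) / (n - (j + 1)).factorial) ^ 2 * (1 / (j + 1).factorial)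
        * (1 - ((j : ℝ) + 1) / n) ^ ((n : ℝ) * Real.log n))
      / (((n.factorial : ℝ) / (n - j).factorial) ^ 2 * (1 / j.factorial)
        * (1 - (j : ℝ) / n) ^ ((n : ℝ) * Real.log n))
      ≤ 2 / n :=
  Bj_ratio_le_general n j hj hjn
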